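/- For every s ∈ ℂ with Re s > 1 there exists a constant C > 0 such that |E(z;s)| ≤ C · (Im z)^{Re s} for every z ∈ ℍ with Im z ≥ 1 (moderate growth of the Eisenstein series in the cusp). -/

import Mathlib

/-- The summand of the Eisenstein series: `(Im z)^s / |m z + n|^{2s}`. -/
noncomputable def eisTerm (s : ℂ) (z : ℂ) (p : ℤ × ℤ) : ℂ :=
  (z.im : ℂ) ^ s / (((‖(p.1 : ℂ) * z + (p.2 : ℂ)‖ : ℝ) : ℂ)) ^ (2 * s)

/-- The Eisenstein series `E(z; s)`, summed over coprime pairs of integers. -/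
noncomputable def eis (s : ℂ) (z : ℂ) : ℂ :=
  ∑' p : {p : ℤ × ℤ // Int.gcd p.1 p.2 = 1}, eisTerm s z (p : ℤ × ℤ)

/-!
For `Im z ≥ 1` both `|m|` and `|Re (m z + n)|` are at most `|m z + n|`, so `|m z + n|` is at least
half the sup-norm of `(m, round (Re (m z + n)))`. The map `(m, n) ↦ (m, round (m Re z + n))` is
injective, hence `|E(z; s)| ≤ 2^{2σ} (Im z)^σ ∑_{0 ≠ q ∈ ℤ²} ‖q‖^{-2σ}` with `σ = Re s`, and the
last sum converges for `σ > 1`.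
-/

open Function

lemma abs_round_le_two_mul_abs (u : ℝ) : |(round u : ℝ)| ≤ 2 * |u| := by
  rcases eq_or_ne (round u) 0 with h | h
  · simp [h]
  · have hone : (1 : ℝ) ≤ |(round u : ℝ)| := by exact_mod_cast Int.one_le_abs h
    have hclose : |(round u : ℝ)| - |u| ≤ 1 / 2 :=
      (abs_sub_abs_le_abs_sub _ _).trans (abs_sub_comm u _ ▸ abs_sub_round u)
    linarith

lemma summable_norm_rpow_neg {k : ℝ} (hk : 2 < k) :
    Summable fun q : ℤ × ℤ ↦ ‖q‖ ^ (-k) := by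
  refine ((finTwoArrowEquiv ℤ).symm.summable_iff.mpr
    (EisensteinSeries.summable_one_div_norm_rpow hk)).congr fun q ↦ ?_
  simp [EisensteinSeries.norm_eq_max_natAbs, Prod.norm_def, Int.norm_eq_abs]

noncomputable def roundShift (x : ℝ) (p : ℤ × ℤ) : ℤ × ℤ := (p.1, round (p.1 * x + p.2))

lemma roundShift_injective (x : ℝ) : Injective (roundShift x) := by
  rintro ⟨m, n⟩ ⟨m', n'⟩ h
  simp only [roundShift, Prod.mk.injEq, round_add_intCast] at h
  obtain ⟨rfl, h⟩ := h
  simpa using h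

lemma roundShift_ne_zero (x : ℝ) {p : ℤ × ℤ} (hp : p ≠ 0) : roundShift x p ≠ 0 := by
  obtain ⟨m, n⟩ := p
  rintro h
  simp only [roundShift, Prod.mk_eq_zero] at h
  obtain ⟨rfl, h⟩ := h
  simp_all

lemma norm_roundShift_le {z : ℂ} (hz : 1 ≤ z.im) (p : ℤ × ℤ) :
    ‖roundShift z.re p‖ ≤ 2 * ‖(p.1 : ℂ) * z + p.2‖ := by
  have hnorm := norm_nonneg ((p.1 : ℂ) * z + p.2)
  refine max_le ?_ ?_
  · calc ‖p.1‖ ≤ |(p.1 : ℝ) * z.im| := by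
          rw [Int.norm_eq_abs, abs_mul]
          exact le_mul_of_one_le_right (abs_nonneg _) (hz.trans (le_abs_self _))
      _ = |((p.1 : ℂ) * z + p.2).im| := by simp
      _ ≤ 2 * ‖(p.1 : ℂ) * z + p.2‖ := by
          linarith [Complex.abs_im_le_norm ((p.1 : ℂ) * z + p.2)]
  · calc ‖round ((p.1 : ℝ) * z.re + p.2)‖ ≤ 2 * |(p.1 : ℝ) * z.re + p.2| := by
          rw [Int.norm_eq_abs]; exact abs_round_le_two_mul_abs _
      _ = 2 * |((p.1 : ℂ) * z + p.2).re| := by simp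
      _ ≤ 2 * ‖(p.1 : ℂ) * z + p.2‖ := by gcongr; exact Complex.abs_re_le_norm _

lemma norm_eisTerm {s z : ℂ} (hs : s.re ≠ 0) (hz : 0 ≤ z.im) (p : ℤ × ℤ) :
    ‖eisTerm s z p‖ = z.im ^ s.re / ‖(p.1 : ℂ) * z + p.2‖ ^ (2 * s.re) := by
  rw [eisTerm, norm_div, Complex.norm_cpow_eq_rpow_re_of_nonneg hz hs,
    Complex.norm_cpow_eq_rpow_re_of_nonneg (norm_nonneg _) (by simpa using hs)]
  simp

lemma norm_eisTerm_le {s z : ℂ} (hs : 0 < s.re) (hz : 1 ≤ z.im) {p : ℤ × ℤ} (hp : p ≠ 0) :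
    ‖eisTerm s z p‖ ≤ 2 ^ (2 * s.re) * z.im ^ s.re * ‖roundShift z.re p‖ ^ (-(2 * s.re)) := by
  have ha : 0 < ‖roundShift z.re p‖ := norm_pos_iff.mpr (roundShift_ne_zero _ hp)
  have hr : ‖roundShift z.re p‖ / 2 ≤ ‖(p.1 : ℂ) * z + p.2‖ := by
    linarith [norm_roundShift_le hz p]
  rw [norm_eisTerm hs.ne' (by linarith), div_eq_mul_inv, mul_comm (_ ^ (2 * s.re)), mul_assoc]
  gcongr
  calc (‖(p.1 : ℂ) * z + p.2‖ ^ (2 * s.re))⁻¹ ≤ ((‖roundShift z.re p‖ / 2) ^ (2 * s.re))⁻¹ := by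
        gcongr
    _ = 2 ^ (2 * s.re) * ‖roundShift z.re p‖ ^ (-(2 * s.re)) := by
        rw [Real.div_rpow ha.le zero_le_two, Real.rpow_neg ha.le]
        field_simp

theorem stmt_12 (s : ℂ) (hs : 1 < s.re) :
    ∃ C : ℝ, 0 < C ∧ ∀ z : ℂ, 0 < z.im → 1 ≤ z.im →
      ‖eis s z‖ ≤ C * z.im ^ s.re := by
  set k := 2 * s.re
  have hg := summable_norm_rpow_neg (k := k) (by linarith)
  have hpos : 0 < ∑' q : ℤ × ℤ, ‖q‖ ^ (-k) :=
    hg.tsum_pos (fun _ ↦ by positivity) (1, 0) (by simp)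
  refine ⟨2 ^ k * ∑' q : ℤ × ℤ, ‖q‖ ^ (-k), by positivity, fun z _ hz ↦ ?_⟩
  have hinj : Injective fun p : {p : ℤ × ℤ // Int.gcd p.1 p.2 = 1} ↦ roundShift z.re p :=
    (roundShift_injective _).comp Subtype.val_injective
  have hp0 (p : {p : ℤ × ℤ // Int.gcd p.1 p.2 = 1}) : (p : ℤ × ℤ) ≠ 0 := fun h ↦ by
    simpa [h] using p.2
  calc ‖eis s z‖
      ≤ 2 ^ k * z.im ^ s.re *
          ∑' p : {p : ℤ × ℤ // Int.gcd p.1 p.2 = 1}, ‖roundShift z.re p‖ ^ (-k) :=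
        tsum_of_norm_bounded ((hg.comp_injective hinj).hasSum.mul_left _)
          fun p ↦ norm_eisTerm_le (by linarith) hz (hp0 p)
    _ ≤ 2 ^ k * z.im ^ s.re * ∑' q : ℤ × ℤ, ‖q‖ ^ (-k) := by
        gcongr
        exact tsum_comp_le_tsum_of_inj hg (fun _ ↦ by positivity) hinj
    _ = _ := by ring
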